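/- arXiv:2410.09424 — 3 statements merged into one kernel-verified Lean document; each statement's English description precedes it below -/
import Mathlib

section
/- Let μ be a positive Radon measure on ℝ^d satisfying the growth condition μ(Q(x,l)) ≤ C₀ l^n for all x ∈ ℝ^d and l > 0, where 0 < n ≤ d and C₀ > 0. Let α > 1 and β > α^n. Then for every x in the support of μ and every c > 0, there exists a nonnegative integer N such that the cube Q centered at x with side length α^N c satisfies μ(αQ) ≤ β μ(Q). -/
open MeasureTheory ENNReal

structure Cube (d : ℕ) where
  center : Fin d → ℝ
  side : ℝ

namespace Cube

/-- The closed axis-parallel cube with the given center and side length. -/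
def toSet {d : ℕ} (Q : Cube d) : Set (Fin d → ℝ) :=
  {y | ∀ i, |y i - Q.center i| ≤ Q.side / 2}

/-- The concentric dilate `ηQ`. -/
def dilate {d : ℕ} (η : ℝ) (Q : Cube d) : Cube d :=
  ⟨Q.center, η * Q.side⟩

end Cube

/-- The growth condition `μ(Q(x,l)) ≤ C₀ l^n`. -/
def GrowthCondition {d : ℕ} (μ : Measure (Fin d → ℝ)) (C₀ n : ℝ) : Prop :=
  ∀ (x : Fin d → ℝ) (l : ℝ), 0 < l →
    μ (Cube.toSet ⟨x, l⟩) ≤ ENNReal.ofReal (C₀ * l ^ n)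

/-- A cube `Q` is `(α,β)`-doubling if `μ(αQ) ≤ β μ(Q)`. -/
def IsDoubling {d : ℕ} (μ : Measure (Fin d → ℝ)) (α β : ℝ) (Q : Cube d) : Prop :=
  μ (Q.dilate α).toSet ≤ ENNReal.ofReal β * μ Q.toSet

/-- `N_{Q,R}`: the first positive integer `k` with `l(2^k Q) ≥ l(R)`. -/
noncomputable def NQR {d : ℕ} (Q R : Cube d) : ℕ :=
  sInf {k : ℕ | 0 < k ∧ R.side ≤ 2 ^ k * Q.side}

/-- The coefficient `K_{Q,R} = 1 + ∑_{k=1}^{N_{Q,R}} μ(2^k Q)/l(2^k Q)^n`. -/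
noncomputable def Kcoef {d : ℕ} (μ : Measure (Fin d → ℝ)) (n : ℝ) (Q R : Cube d) : ℝ :=
  1 + ∑ k ∈ Finset.Icc 1 (NQR Q R),
    (μ ((Q.dilate (2 ^ k)).toSet)).toReal / ((2 ^ k * Q.side) ^ n)

/-- The μ-average `m_Q f` of `f` over a cube `Q`. -/
noncomputable def cubeAvg {d : ℕ} (μ : Measure (Fin d → ℝ))
    (f : (Fin d → ℝ) → ℝ) (Q : Cube d) : ℝ :=
  (∫ x in Q.toSet, f x ∂μ) / (μ Q.toSet).toReal

/-- The exponent of the smallest expansive concentric `(α,β)`-doubling cube. -/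
noncomputable def expIdx {d : ℕ} (μ : Measure (Fin d → ℝ)) (α β : ℝ) (Q : Cube d) : ℕ :=
  sInf {m : ℕ | IsDoubling μ α β (Q.dilate (α ^ m))}

/-- `Q̃`, the smallest expansive concentric `(α,β)`-doubling cube of `Q`. -/
noncomputable def tilde {d : ℕ} (μ : Measure (Fin d → ℝ)) (α β : ℝ) (Q : Cube d) : Cube d :=
  Q.dilate (α ^ expIdx μ α β Q)

/-- The exponent of the biggest contractive concentric `(α,β)`-doubling cube. -/
noncomputable def conIdx {d : ℕ} (μ : Measure (Fin d → ℝ)) (α β : ℝ) (Q : Cube d) : ℕ :=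
  sInf {N : ℕ | IsDoubling μ α β (Q.dilate (α ^ (-(N : ℤ))))}

/-- `Q'`, the biggest contractive concentric `(α,β)`-doubling cube of `Q`. -/
noncomputable def prim {d : ℕ} (μ : Measure (Fin d → ℝ)) (α β : ℝ) (Q : Cube d) : Cube d :=
  Q.dilate (α ^ (-(conIdx μ α β Q : ℤ)))
theorem stmt0 {d : ℕ} (μ : Measure (Fin d → ℝ)) [IsLocallyFiniteMeasure μ]
    (C₀ n α β : ℝ) (hC₀ : 0 < C₀) (hn : 0 < n) (hnd : n ≤ d)
    (hgrowth : GrowthCondition μ C₀ n) (hα : 1 < α) (hβ : α ^ n < β)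
    (x : Fin d → ℝ) (hx : ∀ U : Set (Fin d → ℝ), IsOpen U → x ∈ U → 0 < μ U)
    (c : ℝ) (hc : 0 < c) :
    ∃ N : ℕ, IsDoubling μ α β (⟨x, α ^ N * c⟩ : Cube d) := by
  by_contra h
  push_neg at h
  set Q : ℕ → Cube d := fun N => (⟨x, α ^ N * c⟩ : Cube d) with hQdef
  have hαpos : (0:ℝ) < α := lt_trans one_pos hα
  have hside : ∀ N, ((Q N).dilate α).toSet = (Q (N+1)).toSet := by
    intro N
    have : (Q N).dilate α = Q (N+1) := by
      simp only [hQdef, Cube.dilate]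
      exact congrArg _ (by ring)
    rw [this]
  have hlt : ∀ N, ENNReal.ofReal β * μ (Q N).toSet < μ (Q (N+1)).toSet := by
    intro N
    have := h N
    rw [IsDoubling, not_le, hside N] at this
    exact this
  have hspos : ∀ N, 0 < α ^ N * c := fun N => mul_pos (pow_pos hαpos N) hc
  have hub : ∀ N, μ (Q N).toSet ≤ ENNReal.ofReal (C₀ * (α ^ N * c) ^ n) :=
    fun N => hgrowth x (α ^ N * c) (hspos N)
  have hfin : ∀ N, μ (Q N).toSet ≠ ⊤ :=
    fun N => ne_top_of_le_ne_top ENNReal.ofReal_ne_top (hub N)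
  have hpos0 : 0 < μ (Q 0).toSet := by
    have hball : Metric.ball x (c / 2) ⊆ (Q 0).toSet := by
      intro y hy i
      have h1 : dist (y i) (x i) ≤ dist y x := dist_le_pi_dist y x i
      have h2 : dist y x < c / 2 := hy
      have : |y i - x i| ≤ c / 2 := by
        rw [← Real.dist_eq]
        linarith
      simpa [hQdef, Cube.toSet] using this
    have := hx (Metric.ball x (c / 2)) Metric.isOpen_ball
      (Metric.mem_ball_self (by linarith))
    exact lt_of_lt_of_le this (measure_mono hball)
  have hlb : ∀ N, ENNReal.ofReal β ^ N * μ (Q 0).toSet ≤ μ (Q N).toSet := by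
    intro N
    induction N with
    | zero => simp
    | succ N ih =>
      calc ENNReal.ofReal β ^ (N+1) * μ (Q 0).toSet
          = ENNReal.ofReal β * (ENNReal.ofReal β ^ N * μ (Q 0).toSet) := by ring
        _ ≤ ENNReal.ofReal β * μ (Q N).toSet := mul_le_mul_right ih _
        _ ≤ μ (Q (N+1)).toSet := (hlt N).le
  have hβpos : (0:ℝ) < β := lt_trans (Real.rpow_pos_of_pos hαpos n) hβ
  set m : ℝ := (μ (Q 0).toSet).toReal with hm
  have hmpos : 0 < m := ENNReal.toReal_pos hpos0.ne' (hfin 0)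
  have key : ∀ N : ℕ, β ^ N * m ≤ (α ^ n) ^ N * (C₀ * c ^ n) := by
    intro N
    have h1 : ENNReal.ofReal β ^ N * μ (Q 0).toSet
        ≤ ENNReal.ofReal (C₀ * (α ^ N * c) ^ n) := le_trans (hlb N) (hub N)
    have h2 : β ^ N * m ≤ C₀ * (α ^ N * c) ^ n := by
      have := ENNReal.toReal_mono ENNReal.ofReal_ne_top h1
      rwa [ENNReal.toReal_mul, ENNReal.toReal_pow, ENNReal.toReal_ofReal hβpos.le,
        ENNReal.toReal_ofReal (by positivity)] at this
    have h3 : (α ^ N * c) ^ n = (α ^ n) ^ N * c ^ n := by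
      rw [Real.mul_rpow (by positivity) hc.le]
      congr 1
      rw [← Real.rpow_natCast α N, ← Real.rpow_natCast (α ^ n) N,
        ← Real.rpow_mul hαpos.le, ← Real.rpow_mul hαpos.le, mul_comm]
    rw [h3] at h2
    linarith [h2]
  have hapos : (0:ℝ) < α ^ n := Real.rpow_pos_of_pos hαpos n
  have hone : 1 < β / α ^ n := (one_lt_div hapos).mpr hβ
  obtain ⟨N, hN⟩ := pow_unbounded_of_one_lt (C₀ * c ^ n / m) hone
  have hN' : C₀ * c ^ n / m < β ^ N / (α ^ n) ^ N := by
    rwa [div_pow] at hN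
  have hcontra : (α ^ n) ^ N * (C₀ * c ^ n) < β ^ N * m := by
    have := (div_lt_div_iff₀ hmpos (pow_pos hapos N)).mp hN'
    linarith
  exact absurd (key N) (not_le.mpr hcontra)
end

section
/- Let μ be a positive Radon measure on ℝ^d, α > 1 and β > α^d. Then for μ-almost every x ∈ ℝ^d and every c > 0, there exists a positive integer N such that the cube Q centered at x with side length α^{-N} c satisfies μ(αQ) ≤ β μ(Q). -/
open MeasureTheory ENNReal

open Metric Filter Topology
lemma cube_toSet_eq' {d : ℕ} (x : Fin d → ℝ) {l : ℝ} (hl : 0 ≤ l) :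
    (Cube.toSet ⟨x, l⟩) = Metric.closedBall x (l / 2) := by
  ext y
  simp only [Cube.toSet, Set.mem_setOf_eq, Metric.mem_closedBall]
  rw [dist_pi_le_iff (by linarith)]
  simp [Real.dist_eq]

theorem stmt1 {d : ℕ} (μ : Measure (Fin d → ℝ)) [IsLocallyFiniteMeasure μ]
    (α β : ℝ) (hα : 1 < α) (hβ : α ^ d < β)
    (c : ℝ) (hc : 0 < c) :
    ∀ᵐ x ∂μ, ∃ N : ℕ, 0 < N ∧
      IsDoubling μ α β (⟨x, α ^ (-(N : ℤ)) * c⟩ : Cube d) := by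
  have hα0 : (0:ℝ) < α := lt_trans one_pos hα
  have hβ0 : (0:ℝ) < β := lt_trans (by positivity) hβ
  filter_upwards [Besicovitch.ae_tendsto_rnDeriv (volume : Measure (Fin d → ℝ)) μ,
    Measure.rnDeriv_lt_top (volume : Measure (Fin d → ℝ)) μ] with x hx hLtop
  by_contra hcon
  push_neg at hcon
  -- radii
  set r : ℕ → ℝ := fun N => α ^ (-(N:ℤ)) * c / 2 with hr
  have hrpos : ∀ N, 0 < r N := fun N => by
    have := zpow_pos hα0 (-(N:ℤ)); positivity
  have hrad : ∀ N : ℕ, α * (α ^ (-((N:ℤ)+1)) * c) = α ^ (-(N:ℤ)) * c := by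
    intro N
    rw [← mul_assoc, ← zpow_one_add₀ (ne_of_gt hα0)]
    norm_num
  -- non-doubling at every scale
  have key : ∀ N : ℕ, ENNReal.ofReal β * μ (closedBall x (r (N+1))) ≤
      μ (closedBall x (r N)) := by
    intro N
    have h := hcon (N+1) (Nat.succ_pos N)
    simp only [IsDoubling, not_le, Cube.dilate] at h
    rw [cube_toSet_eq' x (by positivity), cube_toSet_eq' x (by positivity)] at h
    refine le_of_lt (lt_of_lt_of_le h (le_of_eq ?_))
    congr 1
    push_cast
    rw [hrad N]
  have iter : ∀ N : ℕ, (ENNReal.ofReal β) ^ N * μ (closedBall x (r N)) ≤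
      μ (closedBall x (r 0)) := by
    intro N
    induction N with
    | zero => simp
    | succ n ih =>
      calc (ENNReal.ofReal β) ^ (n+1) * μ (closedBall x (r (n+1)))
          = (ENNReal.ofReal β) ^ n * (ENNReal.ofReal β * μ (closedBall x (r (n+1)))) := by
            ring
        _ ≤ (ENNReal.ofReal β) ^ n * μ (closedBall x (r n)) := by gcongr; exact key n
        _ ≤ μ (closedBall x (r 0)) := ih
  -- the ratio along the sequence converges to the finite rnDeriv
  have hr0 : Tendsto r atTop (𝓝[>] 0) := by
    apply tendsto_nhdsWithin_of_tendsto_nhds_of_eventually_within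
    · have heq : r = fun N : ℕ => (α⁻¹) ^ N * (c / 2) := by
        funext N
        simp [hr, zpow_neg, zpow_natCast, inv_pow]
        ring
      rw [heq]
      simpa using (tendsto_pow_atTop_nhds_zero_of_lt_one (by positivity)
        (inv_lt_one_of_one_lt₀ hα)).mul_const (c/2)
    · exact Eventually.of_forall fun N => hrpos N
  have hcomp : Tendsto (fun N => volume (closedBall x (r N)) / μ (closedBall x (r N)))
      atTop (𝓝 ((volume : Measure (Fin d → ℝ)).rnDeriv μ x)) := hx.comp hr0
  set L := (volume : Measure (Fin d → ℝ)).rnDeriv μ x with hL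
  have hC : L < L + 1 := ENNReal.lt_add_right hLtop.ne one_ne_zero
  have hCtop : L + 1 ≠ ⊤ := by
    exact ENNReal.add_ne_top.2 ⟨hLtop.ne, ENNReal.one_ne_top⟩
  have hev : ∀ᶠ N in atTop,
      volume (closedBall x (r N)) / μ (closedBall x (r N)) < L + 1 :=
    hcomp.eventually_lt_const hC
  -- turn into a uniform bound
  set K := (L + 1) * μ (closedBall x (r 0)) with hK
  have hKtop : K ≠ ⊤ := ENNReal.mul_ne_top hCtop
    (IsCompact.measure_lt_top (isCompact_closedBall x (r 0))).ne
  have hbound : ∀ᶠ N in atTop,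
      ENNReal.ofReal (c ^ d * (β / α ^ d) ^ N) ≤ K := by
    filter_upwards [hev] with N hN
    have hμfin : μ (closedBall x (r N)) ≠ ⊤ :=
      (IsCompact.measure_lt_top (isCompact_closedBall x (r N))).ne
    have hvol : volume (closedBall x (r N)) = ENNReal.ofReal ((2 * r N) ^ d) := by
      rw [Real.volume_pi_closedBall x (hrpos N).le]
      simp
    have hvolne : volume (closedBall x (r N)) ≠ 0 := by
      rw [hvol]
      simp only [ne_eq, ENNReal.ofReal_eq_zero, not_le]
      have := hrpos N
      positivity
    have hμne : μ (closedBall x (r N)) ≠ 0 := by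
      intro h0
      rw [h0, ENNReal.div_zero hvolne] at hN
      exact not_top_lt hN
    have h1 : volume (closedBall x (r N)) ≤ (L + 1) * μ (closedBall x (r N)) :=
      (ENNReal.div_le_iff hμne hμfin).1 hN.le
    have h2 : μ (closedBall x (r N)) ≤ μ (closedBall x (r 0)) / (ENNReal.ofReal β) ^ N := by
      rw [ENNReal.le_div_iff_mul_le (Or.inl (by positivity)) (Or.inl (by simp))]
      rw [mul_comm]
      exact iter N
    have h3 : volume (closedBall x (r N)) * (ENNReal.ofReal β) ^ N ≤ K := by
      calc volume (closedBall x (r N)) * (ENNReal.ofReal β) ^ N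
          ≤ ((L + 1) * (μ (closedBall x (r 0)) / (ENNReal.ofReal β) ^ N)) *
            (ENNReal.ofReal β) ^ N := by
            refine mul_le_mul_left (h1.trans (mul_le_mul_right h2 _)) _
        _ ≤ K := by
            rw [mul_assoc, hK]
            gcongr
            exact le_of_eq (ENNReal.div_mul_cancel (by positivity) (by simp))
    refine le_trans (le_of_eq ?_) h3
    rw [hvol, ← ENNReal.ofReal_pow hβ0.le, ← ENNReal.ofReal_mul (by positivity)]
    congr 1
    have h2r : 2 * r N = α ^ (-(N:ℤ)) * c := by rw [hr]; ring
    rw [h2r]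
    rw [zpow_neg, zpow_natCast]
    field_simp
    ring
  -- but the left side tends to infinity
  have ht : 1 < β / α ^ d := (one_lt_div (by positivity)).2 hβ
  have htend : Tendsto (fun N : ℕ => c ^ d * (β / α ^ d) ^ N) atTop atTop :=
    (tendsto_pow_atTop_atTop_of_one_lt ht).const_mul_atTop (by positivity)
  have hbig : ∀ᶠ N in atTop, K.toReal < c ^ d * (β / α ^ d) ^ N :=
    htend.eventually_gt_atTop _
  obtain ⟨N, hN1, hN2⟩ := (hbound.and hbig).exists
  have := (ENNReal.ofReal_le_iff_le_toReal hKtop).1 hN1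
  linarith
end

section
/- Let μ satisfy the growth condition μ(Q(x,l)) ≤ C₀ l^n, let α ∈ (1,2], and let β > α^n. Suppose N is a positive integer and the cubes αQ, α²Q, ..., α^{N-1}Q are all non-(α,β)-doubling. Then K_{Q, α^N Q} ≤ C, where C depends only on α, β, n and C₀ (not on N or Q). -/
open MeasureTheory ENNReal

/-! Write `l = l(Q)`, `A = α ^ n` and `r = A / β < 1`. For `1 ≤ k < N_{Q, α^N Q}` let `j(k)` be
the least `j` with `2 ^ k ≤ α ^ j`; then `1 ≤ j(k) ≤ N` and `α ^ (j(k) - 1) < 2 ^ k`. The cube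
`α^N Q` is reached from `α^{j(k)} Q ⊇ 2^k Q` through `N - j(k)` non-doubling dilations, so
`β^{N-j(k)} μ(2^k Q) ≤ μ(α^N Q) ≤ C₀ A^N l^n`, while `(2^k l)^n ≥ A^{j(k)-1} l^n`; hence the `k`-th
term of `K` is at most `C₀ A r^{N-j(k)}`. As `α ≤ 2`, `j` is strictly increasing, so the exponents
`N - j(k)` are distinct and these terms add up to at most `C₀ A / (1 - r)`. The last term,
`k = N_{Q, α^N Q}`, is at most `C₀` by the growth condition alone. -/

noncomputable def leastPowGE (α x : ℝ) : ℕ :=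
  sInf {j : ℕ | x ≤ α ^ j}

section leastPowGE

variable {α x : ℝ}

theorem le_pow_leastPowGE (hα : 1 < α) (x : ℝ) : x ≤ α ^ leastPowGE α x :=
  Nat.sInf_mem ((pow_unbounded_of_one_lt x hα).imp fun _ h => h.le)

theorem pow_lt_of_lt_leastPowGE {j : ℕ} (h : j < leastPowGE α x) : α ^ j < x :=
  not_le.mp (Nat.notMem_of_lt_sInf h)

theorem leastPowGE_le {j : ℕ} (h : x ≤ α ^ j) : leastPowGE α x ≤ j :=
  Nat.sInf_le h

theorem one_le_leastPowGE (hα : 1 < α) (hx : 1 < x) : 1 ≤ leastPowGE α x := by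
  by_contra! h0
  have := le_pow_leastPowGE hα x
  rw [Nat.lt_one_iff.mp h0, pow_zero] at this
  exact this.not_gt hx

theorem leastPowGE_lt_leastPowGE (hα : 1 < α) (hx : 1 ≤ x) {y : ℝ} (hxy : α * x ≤ y) :
    leastPowGE α x < leastPowGE α y := by
  by_contra! h
  have hy : y ≤ α ^ leastPowGE α x :=
    (le_pow_leastPowGE hα y).trans (pow_le_pow_right₀ hα.le h)
  rcases Nat.eq_zero_or_eq_succ_pred (leastPowGE α x) with h0 | hsucc
  · rw [h0, pow_zero] at hy
    nlinarith
  · have hlt : α ^ (leastPowGE α x).pred < x := pow_lt_of_lt_leastPowGE (by omega)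
    rw [hsucc, pow_succ] at hy
    nlinarith

theorem strictMono_leastPowGE_two_pow (hα1 : 1 < α) (hα2 : α ≤ 2) :
    StrictMono fun k : ℕ => leastPowGE α (2 ^ k) :=
  strictMono_nat_of_lt_succ fun k =>
    leastPowGE_lt_leastPowGE hα1 (one_le_pow₀ one_le_two) (by rw [pow_succ']; gcongr)

end leastPowGE

theorem sum_pow_le_inv_one_sub_of_injOn {r : ℝ} (hr0 : 0 ≤ r) (hr1 : r < 1) {ι : Type*}
    {s : Finset ι} {g : ι → ℕ} (hg : Set.InjOn g s) :
    ∑ i ∈ s, r ^ g i ≤ (1 - r)⁻¹ := by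
  rw [← Finset.sum_image hg, ← tsum_geometric_of_lt_one hr0 hr1]
  exact (summable_geometric_of_lt_one hr0 hr1).sum_le_tsum _ fun i _ => pow_nonneg hr0 i

namespace Cube

variable {d : ℕ}

@[simp]
theorem side_dilate (a : ℝ) (Q : Cube d) : (Q.dilate a).side = a * Q.side :=
  rfl

@[simp]
theorem dilate_dilate (a b : ℝ) (Q : Cube d) : (Q.dilate a).dilate b = Q.dilate (b * a) := by
  simp only [dilate, mul_assoc]

theorem toSet_dilate_mono {Q : Cube d} (hQ : 0 ≤ Q.side) {a b : ℝ} (hab : a ≤ b) :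
    (Q.dilate a).toSet ⊆ (Q.dilate b).toSet := fun _ hy i =>
  (hy i).trans (by simp only [dilate]; gcongr)

end Cube

section NQR

variable {d : ℕ} {Q R : Cube d}

theorem NQR_pos {N : ℕ} (hN : 0 < N) (hR : R.side ≤ 2 ^ N * Q.side) : 0 < NQR Q R :=
  (Nat.sInf_mem (⟨N, hN, hR⟩ : ∃ k, 0 < k ∧ R.side ≤ 2 ^ k * Q.side)).1

theorem two_pow_mul_side_lt_of_lt_NQR {k : ℕ} (hk : 0 < k) (hkN : k < NQR Q R) :
    2 ^ k * Q.side < R.side :=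
  not_le.mp fun h => Nat.notMem_of_lt_sInf hkN ⟨hk, h⟩

theorem two_pow_lt_of_lt_NQR_dilate (hQ : 0 < Q.side) {a : ℝ} {k : ℕ} (hk : 0 < k)
    (hkN : k < NQR Q (Q.dilate a)) : (2 : ℝ) ^ k < a :=
  lt_of_mul_lt_mul_right (two_pow_mul_side_lt_of_lt_NQR hk hkN) hQ.le

end NQR

section Growth

variable {d : ℕ} {μ : Measure (Fin d → ℝ)} {C₀ n α β : ℝ} {Q : Cube d}

theorem GrowthCondition.measure_dilate_le (h : GrowthCondition μ C₀ n) (hQ : 0 < Q.side)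
    {a : ℝ} (ha : 0 < a) : μ (Q.dilate a).toSet ≤ ENNReal.ofReal (C₀ * (a * Q.side) ^ n) :=
  h Q.center _ (mul_pos ha hQ)

theorem GrowthCondition.measure_dilate_div_le (h : GrowthCondition μ C₀ n) (hC₀ : 0 ≤ C₀)
    (hQ : 0 < Q.side) {a : ℝ} (ha : 0 < a) :
    (μ (Q.dilate a).toSet).toReal / (a * Q.side) ^ n ≤ C₀ := by
  have hpos : 0 < (a * Q.side) ^ n := Real.rpow_pos_of_pos (mul_pos ha hQ) n
  rw [div_le_iff₀ hpos]
  exact ENNReal.toReal_le_of_le_ofReal (by positivity) (h.measure_dilate_le hQ ha)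

theorem ofReal_pow_mul_measure_le_of_not_isDoubling (hβ : 0 ≤ β) {i m : ℕ}
    (hND : ∀ j, i ≤ j → j < i + m → ¬ IsDoubling μ α β (Q.dilate (α ^ j))) :
    ENNReal.ofReal (β ^ m) * μ (Q.dilate (α ^ i)).toSet ≤ μ (Q.dilate (α ^ (i + m))).toSet := by
  induction m with
  | zero => simp
  | succ m ih =>
    have hstep : ENNReal.ofReal β * μ (Q.dilate (α ^ (i + m))).toSet ≤
        μ (Q.dilate (α ^ (i + (m + 1)))).toSet := by
      have := not_le.mp (hND (i + m) le_self_add (by omega))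
      rw [Cube.dilate_dilate, ← pow_succ'] at this
      exact this.le
    calc ENNReal.ofReal (β ^ (m + 1)) * μ (Q.dilate (α ^ i)).toSet
        = ENNReal.ofReal β * (ENNReal.ofReal (β ^ m) * μ (Q.dilate (α ^ i)).toSet) := by
          rw [pow_succ', ENNReal.ofReal_mul hβ, mul_assoc]
      _ ≤ ENNReal.ofReal β * μ (Q.dilate (α ^ (i + m))).toSet :=
          mul_le_mul_right (ih fun j hij hjm => hND j hij (by omega)) _
      _ ≤ μ (Q.dilate (α ^ (i + (m + 1)))).toSet := hstep

theorem pow_mul_measure_dilate_le_of_not_isDoubling (hgrowth : GrowthCondition μ C₀ n)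
    (hC₀ : 0 ≤ C₀) (hQ : 0 < Q.side) (hα : 0 < α) (hβ : 0 ≤ β) {i N : ℕ} (hiN : i ≤ N)
    (hND : ∀ j, i ≤ j → j < N → ¬ IsDoubling μ α β (Q.dilate (α ^ j))) :
    β ^ (N - i) * (μ (Q.dilate (α ^ i)).toSet).toReal ≤ C₀ * (α ^ N * Q.side) ^ n := by
  have hchain := ofReal_pow_mul_measure_le_of_not_isDoubling (m := N - i) hβ
    fun j hij hjN => hND j hij (by omega)
  rw [Nat.add_sub_cancel' hiN] at hchain
  have hle := hchain.trans (hgrowth.measure_dilate_le hQ (pow_pos hα N))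
  rw [← ENNReal.toReal_ofReal (pow_nonneg hβ (N - i)), ← ENNReal.toReal_mul]
  exact ENNReal.toReal_le_of_le_ofReal (by positivity) hle

theorem measure_dilate_two_pow_div_le (hgrowth : GrowthCondition μ C₀ n) (hC₀ : 0 ≤ C₀)
    (hn : 0 ≤ n) (hQ : 0 < Q.side) (hα : 1 < α) (hβ : 0 < β) {k N : ℕ} (hk : 0 < k)
    (hkN : (2 : ℝ) ^ k < α ^ N)
    (hND : ∀ j, 1 ≤ j → j < N → ¬ IsDoubling μ α β (Q.dilate (α ^ j))) :
    (μ (Q.dilate (2 ^ k)).toSet).toReal / (2 ^ k * Q.side) ^ n ≤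
      C₀ * α ^ n * (α ^ n / β) ^ (N - leastPowGE α (2 ^ k)) := by
  set j := leastPowGE α (2 ^ k)
  set l := Q.side
  have hj1 : 1 ≤ j := one_le_leastPowGE hα (one_lt_pow₀ (by norm_num) hk.ne')
  have hjN : j ≤ N := leastPowGE_le hkN.le
  have hlow : α ^ (j - 1) < 2 ^ k := pow_lt_of_lt_leastPowGE (by omega)
  have hpow (i : ℕ) : (α ^ i * l) ^ n = (α ^ n) ^ i * l ^ n := by
    rw [Real.mul_rpow (by positivity) hQ.le, Real.rpow_pow_comm (by positivity)]
  have hsplit : (α ^ n) ^ N = α ^ n * (α ^ n) ^ (N - j) * (α ^ n) ^ (j - 1) := by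
    rw [← pow_succ', ← pow_add]
    congr 1
    omega
  have hsub : (μ (Q.dilate (2 ^ k)).toSet).toReal ≤ (μ (Q.dilate (α ^ j)).toSet).toReal :=
    ENNReal.toReal_mono
      ((hgrowth.measure_dilate_le hQ (by positivity)).trans_lt ENNReal.ofReal_lt_top).ne
      (measure_mono (Cube.toSet_dilate_mono hQ.le (le_pow_leastPowGE hα _)))
  have hchain := pow_mul_measure_dilate_le_of_not_isDoubling hgrowth hC₀ hQ (by positivity)
    hβ.le hjN fun i hji hiN => hND i (hj1.trans hji) hiN
  calc (μ (Q.dilate (2 ^ k)).toSet).toReal / (2 ^ k * l) ^ n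
      ≤ (μ (Q.dilate (2 ^ k)).toSet).toReal / (α ^ (j - 1) * l) ^ n := by gcongr
    _ ≤ C₀ * α ^ n * (α ^ n / β) ^ (N - j) := by
      rw [div_le_iff₀ (by positivity)]
      calc (μ (Q.dilate (2 ^ k)).toSet).toReal
          ≤ (μ (Q.dilate (α ^ j)).toSet).toReal := hsub
        _ ≤ C₀ * (α ^ N * l) ^ n / β ^ (N - j) := (le_div_iff₀' (by positivity)).mpr hchain
        _ = C₀ * α ^ n * (α ^ n / β) ^ (N - j) * (α ^ (j - 1) * l) ^ n := by
          rw [hpow, hpow, hsplit, div_pow]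
          field_simp

theorem sum_measure_dilate_two_pow_div_le (hgrowth : GrowthCondition μ C₀ n) (hC₀ : 0 ≤ C₀)
    (hn : 0 ≤ n) (hQ : 0 < Q.side) (hα1 : 1 < α) (hα2 : α ≤ 2) (hβ : α ^ n < β) {M N : ℕ}
    (hkN : ∀ k ∈ Finset.Icc 1 M, (2 : ℝ) ^ k < α ^ N)
    (hND : ∀ j, 1 ≤ j → j < N → ¬ IsDoubling μ α β (Q.dilate (α ^ j))) :
    ∑ k ∈ Finset.Icc 1 M, (μ (Q.dilate (2 ^ k)).toSet).toReal / (2 ^ k * Q.side) ^ n ≤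
      C₀ * α ^ n * (1 - α ^ n / β)⁻¹ := by
  have hβ0 : 0 < β := (Real.rpow_pos_of_pos (by linarith) n).trans hβ
  have hinj : Set.InjOn (fun k => N - leastPowGE α (2 ^ k)) (Finset.Icc 1 M) :=
    fun k₁ hk₁ k₂ hk₂ heq => (strictMono_leastPowGE_two_pow hα1 hα2).injective <| by
      have h₁ := leastPowGE_le (hkN k₁ hk₁).le
      have h₂ := leastPowGE_le (hkN k₂ hk₂).le
      simp only at heq ⊢
      omega
  calc _ ≤ ∑ k ∈ Finset.Icc 1 M, C₀ * α ^ n * (α ^ n / β) ^ (N - leastPowGE α (2 ^ k)) :=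
        Finset.sum_le_sum fun k hk => measure_dilate_two_pow_div_le hgrowth hC₀ hn hQ
          hα1 hβ0 (Finset.mem_Icc.mp hk).1 (hkN k hk) hND
    _ ≤ C₀ * α ^ n * (1 - α ^ n / β)⁻¹ := by
        rw [← Finset.mul_sum]
        gcongr
        exact sum_pow_le_inv_one_sub_of_injOn (by positivity) ((div_lt_one hβ0).mpr hβ) hinj

end Growth

theorem stmt6_general {d : ℕ} (μ : Measure (Fin d → ℝ)) (C₀ n α β : ℝ)
    (hC₀ : 0 < C₀) (hn : 0 < n) (hgrowth : GrowthCondition μ C₀ n)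
    (hα1 : 1 < α) (hα2 : α ≤ 2) (hβ : α ^ n < β) :
    ∃ C : ℝ, 0 < C ∧ ∀ (Q : Cube d) (N : ℕ), 0 < Q.side → 0 < N →
      (∀ j : ℕ, 1 ≤ j → j < N → ¬ IsDoubling μ α β (Q.dilate (α ^ j))) →
      Kcoef μ n Q (Q.dilate (α ^ N)) ≤ C := by
  have hr1 : α ^ n / β < 1 := (div_lt_one ((Real.rpow_pos_of_pos (by linarith) n).trans hβ)).mpr hβ
  have hinv_pos : 0 < (1 - α ^ n / β)⁻¹ := inv_pos.mpr (by linarith)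
  refine ⟨1 + C₀ * α ^ n * (1 - α ^ n / β)⁻¹ + C₀, by positivity, fun Q N hQ hN hND => ?_⟩
  rw [Kcoef]
  set M := NQR Q (Q.dilate (α ^ N))
  have hM : 0 < M := NQR_pos hN (by simp only [Cube.side_dilate]; gcongr)
  have hbulk := sum_measure_dilate_two_pow_div_le hgrowth hC₀.le hn.le hQ hα1 hα2 hβ (M := M - 1)
    (fun k hk => two_pow_lt_of_lt_NQR_dilate hQ (Finset.mem_Icc.mp hk).1
      (by have := (Finset.mem_Icc.mp hk).2; omega)) hND
  have hlast := hgrowth.measure_dilate_div_le hC₀.le hQ (a := 2 ^ (M - 1 + 1)) (by positivity)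
  rw [show M = M - 1 + 1 by omega, Finset.sum_Icc_succ_top (by omega)]
  linarith

theorem stmt6 {d : ℕ} (μ : Measure (Fin d → ℝ)) (C₀ n α β : ℝ)
    (hC₀ : 0 < C₀) (hn : 0 < n) (hnd : n ≤ d) (hgrowth : GrowthCondition μ C₀ n)
    (hα1 : 1 < α) (hα2 : α ≤ 2) (hβ : α ^ n < β) :
    ∃ C : ℝ, 0 < C ∧ ∀ (Q : Cube d) (N : ℕ), 0 < Q.side → 0 < N →
      (∀ j : ℕ, 1 ≤ j → j < N → ¬ IsDoubling μ α β (Q.dilate (α ^ j))) →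
      Kcoef μ n Q (Q.dilate (α ^ N)) ≤ C :=
  stmt6_general μ C₀ n α β hC₀ hn hgrowth hα1 hα2 hβ
end
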